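/- Fix $m>0$ and an integer $n \ge 2$, and let $X$ be a real-valued $C^1$ function and $Y$ a real-valued function on $(m/2,\infty)$. Then $r\,\psi_0(r)\,\beta_n(r) = (N-1)\,r\,\psi_0(r)^2 + 3m$ for all $r>0$, and for every $r > m/2$ the pointwise identity holds: $\frac{(r X'(r)-\beta_n(r) Y(r))^2 + 2(N-1)\alpha(r) X(r) Y(r)}{\alpha(r)\, r^2\, \psi_0(r)} = \frac{\beta_n(r)^2}{\alpha(r)\, r^2\, \psi_0(r)}\Big(Y(r) - \frac{r}{\beta_n(r)} X'(r) + \frac{(N-1)\alpha(r)}{\beta_n(r)^2} X(r)\Big)^2 + (N-1)\,\frac{d}{dr}\Big[\frac{X(r)^2}{(N-1)\, r\, \psi_0(r)^2 + 3m}\Big]$. -/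

import Mathlib

/-- `ψ₀(r) = 1 + m/(2r)`. -/
noncomputable def psi0 (m r : ℝ) : ℝ := 1 + m / (2 * r)

/-- `α(r) = 1 - m/(2r)`. -/
noncomputable def alphaF (m r : ℝ) : ℝ := 1 - m / (2 * r)

/-- `N = n(n+1)/2`. -/
noncomputable def Nn (n : ℕ) : ℝ := (n : ℝ) * ((n : ℝ) + 1) / 2

/-- `β_n(r) = (N-1) ψ₀(r) + 3m/(r ψ₀(r))`. -/
noncomputable def betaF (m : ℝ) (n : ℕ) (r : ℝ) : ℝ :=
  (Nn n - 1) * psi0 m r + 3 * m / (r * psi0 m r)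

/-! Completing the square in `Y` and dividing by `α r² ψ₀` leaves the remainder
`(N-1) (2 X X' / D - (N-1) ψ₀ α X² / D²)` with `D = r ψ₀ β_n = (N-1) r ψ₀² + 3m`.
Since `r ψ₀' = -m/(2r)`, we get `(r ψ₀²)' = ψ₀ (1 - m/(2r)) = ψ₀ α`, so `D' = (N-1) ψ₀ α` and the
remainder is `(N-1) (X² / D)'` by the quotient rule. -/

/-- With `D = r p b` and `D' = c p a`, the last summand is `c (x² / D)'` by the quotient rule. -/
theorem complete_square_with_quotient_rule (c r p a b x x' y : ℝ) (hr : r ≠ 0) (hp : p ≠ 0)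
    (ha : a ≠ 0) (hb : b ≠ 0) :
    ((r * x' - b * y) ^ 2 + 2 * c * a * x * y) / (a * r ^ 2 * p)
      = b ^ 2 / (a * r ^ 2 * p) * (y - r / b * x' + c * a / b ^ 2 * x) ^ 2
        + c * ((2 * x * x' * (r * p * b) - x ^ 2 * (c * (p * a))) / (r * p * b) ^ 2) := by
  field_simp
  ring

theorem one_lt_Nn {n : ℕ} (hn : 2 ≤ n) : 1 < Nn n := by
  have h2 : (2 : ℝ) ≤ n := by exact_mod_cast hn
  unfold Nn
  nlinarith

section

variable {m r : ℝ}

theorem psi0_pos (hm : 0 ≤ m) (hr : 0 < r) : 0 < psi0 m r := by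
  unfold psi0
  positivity

theorem alphaF_pos (hm : 0 ≤ m) (hr : m / 2 < r) : 0 < alphaF m r := by
  have hr0 : 0 < r := by linarith
  unfold alphaF
  rw [sub_pos, div_lt_one (by positivity)]
  linarith

theorem betaF_pos {n : ℕ} (hm : 0 ≤ m) (hn : 2 ≤ n) (hr : 0 < r) : 0 < betaF m n r := by
  have hp := psi0_pos hm hr
  have hN := sub_pos.2 (one_lt_Nn hn)
  unfold betaF
  exact add_pos_of_pos_of_nonneg (mul_pos hN hp) (div_nonneg (by positivity) (mul_pos hr hp).le)

theorem mul_psi0_mul_betaF (n : ℕ) (hr : r ≠ 0) (hp : psi0 m r ≠ 0) :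
    r * psi0 m r * betaF m n r = (Nn n - 1) * r * psi0 m r ^ 2 + 3 * m := by
  unfold betaF
  field_simp

end

theorem hasDerivAt_psi0 (m : ℝ) {r : ℝ} (hr : r ≠ 0) :
    HasDerivAt (psi0 m) (-(m / (2 * r ^ 2))) r := by
  have hpsi0 : psi0 m = fun s => 1 + m / 2 * s⁻¹ := by
    funext s
    rw [psi0]
    ring
  rw [hpsi0]
  exact (((hasDerivAt_inv hr).const_mul (m / 2)).const_add 1).congr_deriv (by ring)

theorem hasDerivAt_mul_psi0_sq (m : ℝ) {r : ℝ} (hr : r ≠ 0) :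
    HasDerivAt (fun s => s * psi0 m s ^ 2) (psi0 m r * alphaF m r) r := by
  refine ((hasDerivAt_id' r).mul ((hasDerivAt_psi0 m hr).fun_pow 2)).congr_deriv ?_
  simp only [psi0, alphaF, Nat.cast_ofNat, Nat.add_one_sub_one, pow_one]
  field_simp
  ring

/-- The completing-the-square identity behind the estimate of `I_n` (eq. (40a) in the paper):
`r ψ₀ β_n = (N-1) r ψ₀² + 3m`, and the integrand of `I_n` equals a perfect square plus
the total derivative `(N-1) d/dr [X² / ((N-1) r ψ₀² + 3m)]`. -/
theorem integrand_complete_square (m : ℝ) (hm : 0 < m) (n : ℕ) (hn : 2 ≤ n)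
    (X Y : ℝ → ℝ) (hX : ContDiffOn ℝ 1 X (Set.Ioi (m / 2))) :
    (∀ r : ℝ, 0 < r →
      r * psi0 m r * betaF m n r = (Nn n - 1) * r * (psi0 m r) ^ 2 + 3 * m) ∧
    ∀ r : ℝ, m / 2 < r →
      ((r * deriv X r - betaF m n r * Y r) ^ 2
          + 2 * (Nn n - 1) * alphaF m r * X r * Y r)
        / (alphaF m r * r ^ 2 * psi0 m r)
      = (betaF m n r) ^ 2 / (alphaF m r * r ^ 2 * psi0 m r) *
          (Y r - r / betaF m n r * deriv X r
            + (Nn n - 1) * alphaF m r / (betaF m n r) ^ 2 * X r) ^ 2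
        + (Nn n - 1) *
            deriv (fun s : ℝ => X s ^ 2 / ((Nn n - 1) * s * (psi0 m s) ^ 2 + 3 * m)) r := by
  refine ⟨fun r hr => mul_psi0_mul_betaF n hr.ne' (psi0_pos hm.le hr).ne', fun r hr => ?_⟩
  have hr0 : 0 < r := by linarith
  have hp := psi0_pos hm.le hr0
  have hb := betaF_pos hm.le hn hr0
  have hXr : HasDerivAt X (deriv X r) r :=
    ((hX.differentiableOn one_ne_zero).differentiableAt (isOpen_Ioi.mem_nhds hr)).hasDerivAt
  have hXsq : HasDerivAt (fun s => X s ^ 2) (2 * X r * deriv X r) r :=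
    (hXr.fun_pow 2).congr_deriv (by norm_num)
  have hD : HasDerivAt (fun s => (Nn n - 1) * s * psi0 m s ^ 2 + 3 * m)
      ((Nn n - 1) * (psi0 m r * alphaF m r)) r := by
    simpa only [mul_assoc] using
      ((hasDerivAt_mul_psi0_sq m hr0.ne').const_mul (Nn n - 1)).add_const (3 * m)
  have hquot : HasDerivAt (fun s => X s ^ 2 / ((Nn n - 1) * s * psi0 m s ^ 2 + 3 * m)) _ r :=
    hXsq.div hD (by rw [← mul_psi0_mul_betaF n hr0.ne' hp.ne']; positivity)
  rw [hquot.deriv, ← mul_psi0_mul_betaF n hr0.ne' hp.ne']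
  exact complete_square_with_quotient_rule _ _ _ _ _ _ _ _ hr0.ne' hp.ne'
    (alphaF_pos hm.le hr).ne' hb.ne'
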